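/- For any fixed sequence of transition matrices χ = (B(1), B(2), …, B(t)) and the random walk of the Correlated Random Walk Process starting at node u, one has E[ q̃^(u)(t) | χ ] = R(t)·e^(u) and E[ W̃^(u)(t) | χ ] = W^(u)(t), where R(t) = B(t)B(t−1)···B(1). -/

import Mathlib

open MeasureTheory ProbabilityTheory Finset

instance finsetFinMeasurableSpace (n : ℕ) : MeasurableSpace (Finset (Fin n)) := ⊤

/-- A step of the Node Model: selected node together with the selected set of neighbours. -/
abbrev NodeStep (n : ℕ) := Fin n × Finset (Fin n)

/-- Distribution of a single step of the Node Model: a uniformly random node `u`,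
together with a uniformly random set of `k` of its neighbours. -/
noncomputable def nodeStepPMF {n : ℕ} (G : SimpleGraph (Fin n)) [DecidableRel G.Adj]
    (hn : Nonempty (Fin n)) (k : ℕ) (hk : ∀ u, k ≤ G.degree u) : PMF (NodeStep n) :=
  letI := hn
  (PMF.uniformOfFintype (Fin n)).bind fun u =>
    (PMF.uniformOfFinset ((G.neighborFinset u).powersetCard k)
      (Finset.powersetCard_nonempty.2 (hk u))).map fun S => (u, S)

/-- One update of the Node Model: the selected node `s.1` replaces its value by an
`α`-fraction of its own value plus a `(1-α)/k`-fraction of the values of the selected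
neighbours `s.2`. -/
noncomputable def nodeUpdate {n : ℕ} (α : ℝ) (k : ℕ) (s : NodeStep n) (ξ : Fin n → ℝ) :
    Fin n → ℝ :=
  fun w => if w = s.1 then α * ξ w + ((1 - α) / k) * ∑ v ∈ s.2, ξ v else ξ w

/-- The trajectory of node values of the Node Model, given the sequence of step choices. -/
noncomputable def nodeTraj {n : ℕ} (α : ℝ) (k : ℕ) (ξ0 : Fin n → ℝ)
    (ω : ℕ → NodeStep n) : ℕ → Fin n → ℝ
  | 0 => ξ0
  | t + 1 => nodeUpdate α k (ω t) (nodeTraj α k ξ0 ω t)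

/-- Stationary distribution of the lazy random walk: `π u = d_u / (2m)`. -/
noncomputable def piRW {n : ℕ} (G : SimpleGraph (Fin n)) [DecidableRel G.Adj] (u : Fin n) : ℝ :=
  (G.degree u : ℝ) / (2 * (G.edgeFinset.card : ℝ))

/-- The potential `φ(ξ) = (1/2) Σ_{u,v} π_u π_v (ξ_u - ξ_v)²`. -/
noncomputable def phi {n : ℕ} (G : SimpleGraph (Fin n)) [DecidableRel G.Adj]
    (ξ : Fin n → ℝ) : ℝ :=
  (1 / 2) * ∑ u, ∑ v, piRW G u * piRW G v * (ξ u - ξ v) ^ 2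

/-- Transition matrix of the lazy random walk on `G`. -/
noncomputable def lazyP {n : ℕ} (G : SimpleGraph (Fin n)) [DecidableRel G.Adj] :
    Matrix (Fin n) (Fin n) ℝ :=
  Matrix.of fun i j =>
    if i = j then 1 / 2 else if G.Adj i j then 1 / (2 * (G.degree i : ℝ)) else 0

/-- `lam` is the second-largest eigenvalue of the (reversible) lazy random-walk matrix `P`:
it is the largest eigenvalue attained on the space of vectors `π`-orthogonal to `1`. -/
def IsSecondEigenvalueP {n : ℕ} (G : SimpleGraph (Fin n)) [DecidableRel G.Adj]
    (lam : ℝ) : Prop :=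
  (∃ f : Fin n → ℝ, f ≠ 0 ∧ (lazyP G).mulVec f = lam • f ∧ ∑ x, piRW G x * f x = 0) ∧
  ∀ lam' : ℝ,
    (∃ f : Fin n → ℝ, f ≠ 0 ∧ (lazyP G).mulVec f = lam' • f ∧ ∑ x, piRW G x * f x = 0) →
      lam' ≤ lam

/-- The matrix `B(s)` of one diffusion step with step choice `s = (u, S)`:
`B_{ii} = 1` for `i ≠ u`, `B_{uu} = α`, `B_{i,u} = (1-α)/k` for `i ∈ S`, and `0` otherwise. -/
noncomputable def Bmat {n : ℕ} (α : ℝ) (k : ℕ) (s : NodeStep n) :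
    Matrix (Fin n) (Fin n) ℝ :=
  Matrix.of fun i j =>
    if j = s.1 then (if i = s.1 then α else if i ∈ s.2 then (1 - α) / k else 0)
    else if i = j then 1 else 0

/-- The product `R(t) = B(t) B(t-1) ⋯ B(1)` of the diffusion-step matrices, where the step
at time `t` uses the choice `ω (t-1)`. -/
noncomputable def Rmat {n : ℕ} (α : ℝ) (k : ℕ) (ω : ℕ → NodeStep n) :
    ℕ → Matrix (Fin n) (Fin n) ℝ
  | 0 => 1
  | t + 1 => Bmat α k (ω t) * Rmat α k ω t

/-- The cost vector `W(t) = ξ(0)ᵀ R(t)` of the Diffusion Process applied to the cost vector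
`ξ(0)ᵀ` and the initial load vectors `e^(u)`, `u ∈ V`. -/
noncomputable def Wcost {n : ℕ} (α : ℝ) (k : ℕ) (ξ0 : Fin n → ℝ) (ω : ℕ → NodeStep n)
    (t : ℕ) : Fin n → ℝ :=
  Matrix.vecMul ξ0 (Rmat α k ω t)

/-! The law of the walk obeys the forward equation `p(t+1) = B(t+1) p(t)` with `p(0) = e^(u)`,
hence `p(t) = R(t) e^(u)`; the expected cost is then `ξ(0)ᵀ p(t) = W^(u)(t)`. -/

section FiniteValued

variable {Ω ι : Type*} [MeasurableSpace Ω] {μ : Measure Ω} [MeasurableSpace ι]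
  [MeasurableSingletonClass ι]

theorem measure_eq_ite_of_measure_eq_one [IsProbabilityMeasure μ] [DecidableEq ι] {Y : Ω → ι}
    (hY : Measurable Y) {u : ι} (hu : μ {ω | Y ω = u} = 1) (y : ι) :
    μ {ω | Y ω = y} = if y = u then 1 else 0 := by
  split_ifs with hyu
  · rwa [hyu]
  · refine measure_mono_null (fun ω hω hωu => hyu (hω.symm.trans hωu)) ?_
    exact (prob_compl_eq_zero_iff (hY (measurableSet_singleton u))).2 hu

variable [Fintype ι]

theorem measure_eq_sum_measure_inter_fiber {Y : Ω → ι} (hY : Measurable Y) (s : Set Ω) :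
    μ s = ∑ x, μ (s ∩ {ω | Y ω = x}) := by
  have h := sum_measure_preimage_singleton (μ := μ.restrict s) Finset.univ
    fun x _ => hY (measurableSet_singleton x)
  simp only [Finset.coe_univ, Set.preimage_univ, Measure.restrict_apply_univ] at h
  rw [← h]
  refine Finset.sum_congr rfl fun x _ => ?_
  rw [Measure.restrict_apply (hY (measurableSet_singleton x)), Set.inter_comm]
  rfl

theorem measure_eq_ofReal_mulVec {X Y : Ω → ι} (hX : Measurable X) {M : Matrix ι ι ℝ}
    {p : ι → ℝ} (hM : ∀ y x, 0 ≤ M y x) (hp : ∀ x, 0 ≤ p x)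
    (hlaw : ∀ x, μ {ω | X ω = x} = ENNReal.ofReal (p x))
    (hstep : ∀ x y, μ {ω | Y ω = y ∧ X ω = x} = ENNReal.ofReal (M y x) * μ {ω | X ω = x})
    (y : ι) : μ {ω | Y ω = y} = ENNReal.ofReal (M.mulVec p y) := by
  simp only [Matrix.mulVec, dotProduct]
  rw [measure_eq_sum_measure_inter_fiber hX,
    ENNReal.ofReal_sum_of_nonneg fun x _ => mul_nonneg (hM y x) (hp x)]
  refine Finset.sum_congr rfl fun x _ => ?_
  rw [ENNReal.ofReal_mul (hM y x), ← hlaw, ← hstep]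
  rfl

theorem integral_comp_eq_sum_measureReal_smul {E : Type*} [NormedAddCommGroup E]
    [NormedSpace ℝ E] [CompleteSpace E] [IsFiniteMeasure μ] {Y : Ω → ι} (hY : Measurable Y)
    (f : ι → E) :
    ∫ ω, f (Y ω) ∂μ = ∑ y, μ.real {ω | Y ω = y} • f y := by
  rw [← integral_map hY.aemeasurable (Integrable.of_finite).aestronglyMeasurable,
    integral_fintype Integrable.of_finite]
  refine Finset.sum_congr rfl fun y _ => ?_
  rw [map_measureReal_apply hY (measurableSet_singleton y)]
  rfl

end FiniteValued

section Diffusion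

variable {n : ℕ} {α : ℝ} {k : ℕ}

theorem Bmat_nonneg (hα₀ : 0 ≤ α) (hα₁ : α ≤ 1) (s : NodeStep n) (i j : Fin n) :
    0 ≤ Bmat α k s i j := by
  have : 0 ≤ (1 - α) / k := div_nonneg (sub_nonneg.2 hα₁) k.cast_nonneg
  simp only [Bmat, Matrix.of_apply]
  split_ifs <;> first | assumption | norm_num

theorem Rmat_nonneg (hα₀ : 0 ≤ α) (hα₁ : α ≤ 1) (χ : ℕ → NodeStep n) :
    ∀ t (i j : Fin n), 0 ≤ Rmat α k χ t i j
  | 0, i, j => by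
    rw [Rmat, Matrix.one_apply]
    split_ifs <;> norm_num
  | t + 1, i, j => by
    rw [Rmat, Matrix.mul_apply]
    exact Finset.sum_nonneg fun x _ =>
      mul_nonneg (Bmat_nonneg hα₀ hα₁ _ i x) (Rmat_nonneg hα₀ hα₁ χ t x j)

theorem measure_eq_ofReal_Rmat (hα₀ : 0 ≤ α) (hα₁ : α ≤ 1) (χ : ℕ → NodeStep n) {u : Fin n}
    {Ω : Type*} [MeasurableSpace Ω] {μ : Measure Ω} [IsProbabilityMeasure μ]
    {X : ℕ → Ω → Fin n} (hX : ∀ t, Measurable (X t)) (hX0 : μ {ω | X 0 ω = u} = 1)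
    (hstep : ∀ t (x y : Fin n), μ {ω | X (t + 1) ω = y ∧ X t ω = x} =
      ENNReal.ofReal (Bmat α k (χ t) y x) * μ {ω | X t ω = x}) :
    ∀ t y, μ {ω | X t ω = y} = ENNReal.ofReal (Rmat α k χ t y u)
  | 0, y => by
    rw [measure_eq_ite_of_measure_eq_one (hX 0) hX0, Rmat, Matrix.one_apply]
    split_ifs <;> simp
  | t + 1, y =>
    measure_eq_ofReal_mulVec (hX t) (Bmat_nonneg hα₀ hα₁ (χ t))
      (fun x => Rmat_nonneg hα₀ hα₁ χ t x u)
      (measure_eq_ofReal_Rmat hα₀ hα₁ χ hX hX0 hstep t) (hstep t) y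

end Diffusion

theorem correlated_walk_expectation_fixed_sequence_general {n : ℕ}
    (α : ℝ) (hα : α ∈ Set.Ioo (0 : ℝ) 1)
    (k : ℕ) (ξ0 : Fin n → ℝ)
    (χ : ℕ → NodeStep n)
    (u : Fin n)
    (Ω : Type) (mΩ : MeasurableSpace Ω) (Pr : Measure Ω) (hPr : IsProbabilityMeasure Pr)
    (X : ℕ → Ω → Fin n) (hmeas : ∀ t, Measurable (X t))
    (hX0 : Pr {ω | X 0 ω = u} = 1)
    (hXstep : ∀ (t : ℕ) (x y : Fin n),
      Pr {ω | X (t + 1) ω = y ∧ X t ω = x} =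
        ENNReal.ofReal (Bmat α k (χ t) y x) * Pr {ω | X t ω = x}) :
    (∀ (t : ℕ) (y : Fin n),
        Pr {ω | X t ω = y} = ENNReal.ofReal (Rmat α k χ t y u)) ∧
    (∀ t : ℕ, ∫ ω, ξ0 (X t ω) ∂Pr = Wcost α k ξ0 χ t u) := by
  have hlaw := measure_eq_ofReal_Rmat hα.1.le hα.2.le χ hmeas hX0 hXstep
  refine ⟨hlaw, fun t => ?_⟩
  rw [integral_comp_eq_sum_measureReal_smul (hmeas t), Wcost, Matrix.vecMul, dotProduct]
  refine Finset.sum_congr rfl fun y _ => ?_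
  rw [measureReal_def, hlaw, ENNReal.toReal_ofReal (Rmat_nonneg hα.1.le hα.2.le χ t y u),
    smul_eq_mul, mul_comm]

/-- **Lemma 3 (random walk vs. diffusion, fixed matrix sequence).**
Fix a sequence `χ` of step choices (equivalently, of transition matrices `B(1), B(2), …`).
Let `X` be the random walk of the Correlated Random Walk Process starting at node `u`: it
starts at `u` (first hypothesis) and, at step `t+1`, moves according to the matrix
`B(χ(t))`, i.e. `P(X(t+1) = y, X(t) = x) = B(χ t)_{y,x} · P(X(t) = x)` (second hypothesis).
Then `E[q̃^(u)(t) | χ] = R(t) e^(u)` — the law of `X(t)` is the `u`-th column of `R(t)` —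
and `E[W̃^(u)(t) | χ] = W^(u)(t)`, where `W̃^(u)(t) = ξ(0)ᵀ q̃^(u)(t)`. -/
theorem correlated_walk_expectation_fixed_sequence {n : ℕ} (G : SimpleGraph (Fin n))
    [DecidableRel G.Adj] (α : ℝ) (hα : α ∈ Set.Ioo (0 : ℝ) 1)
    (k : ℕ) (hk1 : 1 ≤ k) (ξ0 : Fin n → ℝ)
    (χ : ℕ → NodeStep n)
    (hfeas : ∀ t, (χ t).2 ⊆ G.neighborFinset (χ t).1 ∧ (χ t).2.card = k)
    (u : Fin n)
    (Ω : Type) (mΩ : MeasurableSpace Ω) (Pr : Measure Ω) (hPr : IsProbabilityMeasure Pr)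
    (X : ℕ → Ω → Fin n) (hmeas : ∀ t, Measurable (X t))
    (hX0 : Pr {ω | X 0 ω = u} = 1)
    (hXstep : ∀ (t : ℕ) (x y : Fin n),
      Pr {ω | X (t + 1) ω = y ∧ X t ω = x} =
        ENNReal.ofReal (Bmat α k (χ t) y x) * Pr {ω | X t ω = x}) :
    (∀ (t : ℕ) (y : Fin n),
        Pr {ω | X t ω = y} = ENNReal.ofReal (Rmat α k χ t y u)) ∧
    (∀ t : ℕ, ∫ ω, ξ0 (X t ω) ∂Pr = Wcost α k ξ0 χ t u) :=
  correlated_walk_expectation_fixed_sequence_general α hα k ξ0 χ u Ω mΩ Pr hPr X hmeas hX0 hXstep
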